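/- arXiv:2001.01289 — 7 statements merged into one kernel-verified Lean document; each statement's English description precedes it below -/
import Mathlib

section
/- Let γ, δ, m, d be positive integers and let B be an integer with B > (γ+δ)·(m−1). For a nonnegative integer r, define Q_r = { Σ_{i=0}^{d−1} x_i·B^i : x_0,…,x_{d−1} are integers with 0 ≤ x_i < m for all i and Σ_{i=0}^{d−1} x_i² = r }. Then Q_r is (γ,δ)-free, i.e., there are no three distinct elements a, b, c ∈ Q_r with γ·a + δ·b = (γ+δ)·c. -/
/-- The Behrend-style set `Q_r`: integers of the form `∑ x_i · B^i` where each digit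
satisfies `0 ≤ x_i < m` and the sum of squares of the digits equals `r`. -/
def behrendSet (m d : ℕ) (B : ℤ) (r : ℕ) : Set ℤ :=
  {n : ℤ | ∃ x : Fin d → ℤ, (∀ i, 0 ≤ x i ∧ x i < (m : ℤ)) ∧
    (∑ i, (x i) ^ 2 = (r : ℤ)) ∧ n = ∑ i, x i * B ^ (i : ℕ)}

lemma digits_unique (B : ℤ) (hB : 0 < B) :
    ∀ d (u v : Fin d → ℤ), (∀ i, 0 ≤ u i ∧ u i < B) → (∀ i, 0 ≤ v i ∧ v i < B) →
      (∑ i, u i * B ^ (i : ℕ)) = (∑ i, v i * B ^ (i : ℕ)) → u = v := by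
  intro d
  induction d with
  | zero => intro u v _ _ _; ext i; exact absurd i.2 (Nat.not_lt_zero _)
  | succ n ih =>
    intro u v hu hv hsum
    have hrw : ∀ w : Fin (n+1) → ℤ,
        (∑ i, w i * B ^ (i : ℕ)) = w 0 + B * ∑ i : Fin n, w i.succ * B ^ (i : ℕ) := by
      intro w
      rw [Fin.sum_univ_succ, Finset.mul_sum]
      simp [pow_succ, mul_comm, mul_assoc, mul_left_comm]
    rw [hrw u, hrw v] at hsum
    have h0 : u 0 = v 0 := by
      have h1 : (u 0 + B * ∑ i : Fin n, u i.succ * B ^ (i : ℕ)) % B = u 0 := by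
        rw [Int.add_mul_emod_self_left, Int.emod_eq_of_lt (hu 0).1 (hu 0).2]
      have h2 : (v 0 + B * ∑ i : Fin n, v i.succ * B ^ (i : ℕ)) % B = v 0 := by
        rw [Int.add_mul_emod_self_left, Int.emod_eq_of_lt (hv 0).1 (hv 0).2]
      rw [← h1, ← h2, hsum]
    have htail : (fun i : Fin n => u i.succ) = fun i => v i.succ := by
      apply ih _ _ (fun i => hu i.succ) (fun i => hv i.succ)
      have : B * ∑ i : Fin n, u i.succ * B ^ (i : ℕ)
           = B * ∑ i : Fin n, v i.succ * B ^ (i : ℕ) := by omega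
      exact mul_left_cancel₀ (ne_of_gt hB) this
    ext i
    rcases Fin.eq_zero_or_eq_succ i with h | ⟨j, rfl⟩
    · rw [h]; exact h0
    · exact congrFun htail j

theorem stmt_0 (γ δ : ℤ) (hγ : 0 < γ) (hδ : 0 < δ) (m d : ℕ) (hm : 0 < m) (hd : 0 < d)
    (B : ℤ) (hB : (γ + δ) * ((m : ℤ) - 1) < B) (r : ℕ) :
    ¬ ∃ a ∈ behrendSet m d B r, ∃ b ∈ behrendSet m d B r, ∃ c ∈ behrendSet m d B r,
      a ≠ b ∧ a ≠ c ∧ b ≠ c ∧ γ * a + δ * b = (γ + δ) * c := by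
  rintro ⟨a, ⟨x, hx, hxr, rfl⟩, b, ⟨y, hy, hyr, rfl⟩, c, ⟨z, hz, hzr, rfl⟩,
    hab, hac, hbc, heq⟩
  have hm1 : (0:ℤ) ≤ (m:ℤ) - 1 := by
    have : (1:ℤ) ≤ (m:ℤ) := by exact_mod_cast hm
    linarith
  have hBpos : 0 < B := lt_of_le_of_lt (by positivity) hB
  -- digit bounds
  have hub : ∀ i, 0 ≤ γ * x i + δ * y i ∧ γ * x i + δ * y i < B := by
    intro i
    obtain ⟨hx1, hx2⟩ := hx i; obtain ⟨hy1, hy2⟩ := hy i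
    constructor
    · positivity
    · have : γ * x i + δ * y i ≤ (γ + δ) * ((m:ℤ) - 1) := by nlinarith
      linarith
  have hvb : ∀ i, 0 ≤ (γ + δ) * z i ∧ (γ + δ) * z i < B := by
    intro i
    obtain ⟨hz1, hz2⟩ := hz i
    constructor
    · positivity
    · have : (γ + δ) * z i ≤ (γ + δ) * ((m:ℤ) - 1) := by nlinarith
      linarith
  -- the linear equation gives digitwise equation
  have hsum : (∑ i, (γ * x i + δ * y i) * B ^ (i : ℕ))
      = ∑ i, ((γ + δ) * z i) * B ^ (i : ℕ) := by
    have hL : (∑ i, (γ * x i + δ * y i) * B ^ (i : ℕ))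
        = γ * ∑ i, x i * B ^ (i : ℕ) + δ * ∑ i, y i * B ^ (i : ℕ) := by
      rw [Finset.mul_sum, Finset.mul_sum, ← Finset.sum_add_distrib]
      exact Finset.sum_congr rfl fun i _ => by ring
    have hR : (∑ i, ((γ + δ) * z i) * B ^ (i : ℕ))
        = (γ + δ) * ∑ i, z i * B ^ (i : ℕ) := by
      rw [Finset.mul_sum]
      exact Finset.sum_congr rfl fun i _ => by ring
    rw [hL, hR]; exact heq
  have hdig := digits_unique B hBpos d _ _ hub hvb hsum
  have hdig' : ∀ i, γ * x i + δ * y i = (γ + δ) * z i := fun i => congrFun hdig i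
  -- convexity: ∑ (γ x + δ y)² = (γ+δ)² ∑ z²
  have hsq : (∑ i, (γ * x i + δ * y i) ^ 2) = (γ + δ) ^ 2 * (r : ℤ) := by
    rw [show (∑ i, (γ * x i + δ * y i) ^ 2) = ∑ i, ((γ + δ) * z i) ^ 2 by
      exact Finset.sum_congr rfl fun i _ => by rw [hdig' i]]
    rw [show (∑ i, ((γ + δ) * z i) ^ 2) = (γ + δ)^2 * ∑ i, (z i)^2 by
      rw [Finset.mul_sum]; exact Finset.sum_congr rfl fun i _ => by ring]
    rw [hzr]
  have hexp : (∑ i, (γ * x i + δ * y i) ^ 2)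
      = γ^2 * (∑ i, (x i)^2) + δ^2 * (∑ i, (y i)^2) + 2 * γ * δ * ∑ i, x i * y i := by
    rw [Finset.mul_sum, Finset.mul_sum, Finset.mul_sum,
      ← Finset.sum_add_distrib, ← Finset.sum_add_distrib]
    exact Finset.sum_congr rfl fun i _ => by ring
  rw [hxr, hyr] at hexp
  have hxy : (∑ i, x i * y i) = (r : ℤ) := by
    have h2 : 2 * γ * δ * (∑ i, x i * y i) = 2 * γ * δ * (r : ℤ) := by
      linear_combination hsq - hexp
    exact mul_left_cancel₀ (by positivity) h2
  have hzero : (∑ i, (x i - y i) ^ 2) = 0 := by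
    have : (∑ i, (x i - y i) ^ 2) = ∑ i, ((x i)^2 - 2 * (x i * y i) + (y i)^2) :=
      Finset.sum_congr rfl fun i _ => by ring
    rw [this, Finset.sum_add_distrib, Finset.sum_sub_distrib, ← Finset.mul_sum, hxr, hyr, hxy]
    ring
  have hxeqy : ∀ i, x i = y i := by
    intro i
    have h := (Finset.sum_eq_zero_iff_of_nonneg
      (fun i _ => sq_nonneg (x i - y i))).mp hzero i (Finset.mem_univ i)
    have := sq_eq_zero_iff.mp h
    linarith
  exact hab (Finset.sum_congr rfl fun i _ => by rw [hxeqy i])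
end

section
/- For all positive integers γ and δ there exists a constant C > 0 such that for every integer N ≥ 2 there exists a (γ,δ)-free set Q ⊆ {1,2,…,N} with |Q| ≥ N / 2^{C·√(log₂ N)}. -/
/-- A set `X` of integers is `(γ,δ)`-free if no three distinct elements `a, b, c ∈ X`
satisfy `γ·a + δ·b = (γ+δ)·c`. -/
def IsFree (γ δ : ℤ) (X : Set ℤ) : Prop :=
  ¬ ∃ a ∈ X, ∃ b ∈ X, ∃ c ∈ X, a ≠ b ∧ a ≠ c ∧ b ≠ c ∧ γ * a + δ * b = (γ + δ) * c

/-!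
Behrend's construction. Lattice points on a sphere in `ℕⁿ` contain no nontrivial solution of
`γ a + δ b = (γ + δ) c`. Reading a point as the digits of an integer in a base `D` large enough
that `γ a + δ b` never carries turns such a set into a `(γ, δ)`-free set of integers below `Dⁿ`.
By pigeonhole some sphere carries a `1 / (n d²)` fraction of the `dⁿ` points of the box; with
`n ≈ √(log₂ N)` digits of size `d ≈ 2^√(log₂ N)` this loses only a factor `2^O(√(log₂ N))`.
-/

open Finset

lemma Set.Subsingleton.isFree {X : Set ℤ} (hX : X.Subsingleton) (γ δ : ℤ) : IsFree γ δ X :=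
  fun ⟨_, ha, _, hb, _, _, hab, _⟩ => hab (hX ha hb)

/-- `γ δ |a - b|² = (γ + δ)(γ |a|² + δ |b|²) - |γ a + δ b|²`, so two points of a sphere cannot have
a weighted mean on the same sphere unless they coincide. -/
lemma eq_of_mul_add_mul_eq_of_sum_sq_eq {ι R : Type*} [Fintype ι] [CommRing R] [LinearOrder R]
    [IsStrictOrderedRing R] {γ δ k : R} (hγ : 0 < γ) (hδ : 0 < δ) {a b c : ι → R}
    (ha : ∑ i, a i ^ 2 = k) (hb : ∑ i, b i ^ 2 = k) (hc : ∑ i, c i ^ 2 = k)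
    (h : ∀ i, γ * a i + δ * b i = (γ + δ) * c i) : a = b := by
  have hsum : ∑ i, γ * δ * (a i - b i) ^ 2 = 0 := calc
    ∑ i, γ * δ * (a i - b i) ^ 2
        = ∑ i, ((γ + δ) * (γ * a i ^ 2 + δ * b i ^ 2) - (γ + δ) ^ 2 * c i ^ 2) :=
      sum_congr rfl fun i _ => by linear_combination (-(γ * a i + δ * b i + (γ + δ) * c i)) * h i
    _ = (γ + δ) * (γ * k + δ * k) - (γ + δ) ^ 2 * k := by
      simp only [sum_sub_distrib, sum_add_distrib, ← mul_sum, ha, hb, hc]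
    _ = 0 := by ring
  funext i
  have hi := (sum_eq_zero_iff_of_nonneg fun i _ => by positivity).1 hsum i (mem_univ i)
  simpa [hγ.ne', hδ.ne', sub_eq_zero] using hi

namespace Behrend

lemma map_lt_pow {n D : ℕ} {x : Fin n → ℕ} (hx : ∀ i, x i < D) : map D x < D ^ n := by
  induction n with
  | zero => simp
  | succ n ih =>
    have hlt : map D (x ∘ Fin.succ) < D ^ n := ih fun i => hx i.succ
    rw [map_succ', pow_succ]
    nlinarith [hx 0]

lemma eq_of_smul_add_smul_eq {γ δ n d k : ℕ} (hγ : 0 < γ) (hδ : 0 < δ) {a b c : Fin n → ℕ}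
    (ha : a ∈ sphere n d k) (hb : b ∈ sphere n d k) (hc : c ∈ sphere n d k)
    (h : γ • a + δ • b = (γ + δ) • c) : a = b := by
  have hsum {x : Fin n → ℕ} (hx : x ∈ sphere n d k) : ∑ i, (x i : ℤ) ^ 2 = k := by
    exact_mod_cast (mem_filter.1 hx).2
  refine Nat.cast_injective.comp_left (eq_of_mul_add_mul_eq_of_sum_sq_eq (R := ℤ)
    (Nat.cast_pos.2 hγ) (Nat.cast_pos.2 hδ) (hsum ha) (hsum hb) (hsum hc) fun i => ?_)
  have hi := congrFun h i
  simp only [Pi.add_apply, Pi.smul_apply, smul_eq_mul] at hi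
  simp only [Function.comp_apply]
  exact_mod_cast hi

variable {n d k D : ℕ}

lemma lt_of_mem_sphere {x : Fin n → ℕ} (hx : x ∈ sphere n d k) (i : Fin n) : x i < d :=
  mem_box.1 (sphere_subset_box hx) i

lemma isFree_image_sphere {γ δ : ℕ} (hγ : 0 < γ) (hδ : 0 < δ) (hD : (γ + δ) * d ≤ D) :
    IsFree γ δ ((sphere n d k).image fun x => (map D x : ℤ) + 1 : Set ℤ) := by
  rintro ⟨_, ha, _, hb, _, hc, hab, -, -, h⟩
  simp only [coe_image, Set.mem_image, mem_coe] at ha hb hc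
  obtain ⟨a, ha, rfl⟩ := ha
  obtain ⟨b, hb, rfl⟩ := hb
  obtain ⟨c, hc, rfl⟩ := hc
  have hmap : map D (γ • a + δ • b) = map D ((γ + δ) • c) := by
    simp only [map_add, map_nsmul, smul_eq_mul]
    have : (γ : ℤ) * map D a + δ * map D b = (γ + δ) * map D c := by linarith
    exact_mod_cast this
  have hlt₁ i : (γ • a + δ • b) i < D := by
    simp only [Pi.add_apply, Pi.smul_apply, smul_eq_mul]
    nlinarith [lt_of_mem_sphere ha i, lt_of_mem_sphere hb i]
  have hlt₂ i : ((γ + δ) • c) i < D := by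
    simp only [Pi.smul_apply, smul_eq_mul]
    nlinarith [lt_of_mem_sphere hc i]
  rw [eq_of_smul_add_smul_eq hγ hδ ha hb hc (map_injOn hlt₁ hlt₂ hmap)] at hab
  exact hab rfl

lemma image_sphere_subset_Icc (hdD : d ≤ D) :
    ((sphere n d k).image fun x => (map D x : ℤ) + 1 : Set ℤ) ⊆ Set.Icc 1 (D ^ n : ℕ) := by
  rintro _ hx
  simp only [coe_image, Set.mem_image, mem_coe] at hx
  obtain ⟨x, hx, rfl⟩ := hx
  have := map_lt_pow fun i => (lt_of_mem_sphere hx i).trans_le hdD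
  constructor <;> omega

lemma card_image_sphere (hdD : d ≤ D) :
    #((sphere n d k).image fun x => (map D x : ℤ) + 1) = #(sphere n d k) :=
  card_image_of_injOn fun _ hx _ hy hxy => map_injOn
    (fun i => (lt_of_mem_sphere hx i).trans_le hdD) (fun i => (lt_of_mem_sphere hy i).trans_le hdD)
    (Nat.cast_injective (add_right_cancel hxy))

end Behrend

open Behrend

/-- Behrend's construction with `u` digits in base `2 ^ u`, each digit below `2 ^ (u - (γ + δ))`,
so that weighted means never carry. -/
lemma exists_isFree_subset_Icc_pow_sq {γ δ u : ℕ} (hγ : 0 < γ) (hδ : 0 < δ) (hu : γ + δ ≤ u) :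
    ∃ Q : Finset ℤ, ↑Q ⊆ Set.Icc (1 : ℤ) (2 ^ u ^ 2 : ℕ) ∧ IsFree γ δ ↑Q ∧
      2 ^ ((u - (γ + δ)) * u) ≤ #Q * 2 ^ (3 * u) := by
  set d := 2 ^ (u - (γ + δ))
  have hD : (γ + δ) * d ≤ 2 ^ u := calc
    (γ + δ) * d ≤ 2 ^ (γ + δ) * d := Nat.mul_le_mul_right _ (Nat.lt_two_pow_self).le
    _ = 2 ^ u := by rw [← pow_add, Nat.add_sub_cancel' hu]
  have hdD : d ≤ 2 ^ u := le_trans (Nat.le_mul_of_pos_left d (by omega)) hD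
  obtain ⟨k, hk⟩ := exists_large_sphere u d
  refine ⟨_, ?_, isFree_image_sphere (n := u) (k := k) hγ hδ hD, ?_⟩
  · rw [pow_two, pow_mul]
    exact image_sphere_subset_Icc hdD
  rw [card_image_sphere hdD]
  have hpos : (0 : ℝ) < (u * d ^ 2 : ℕ) :=
    Nat.cast_pos.2 (Nat.mul_pos (by omega) (pow_pos (Nat.two_pow_pos _) 2))
  have hsphere : d ^ u ≤ #(sphere u d k) * (u * d ^ 2) := by
    exact_mod_cast (div_le_iff₀ hpos).1 hk
  calc 2 ^ ((u - (γ + δ)) * u) = d ^ u := by rw [pow_mul]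
    _ ≤ #(sphere u d k) * (u * d ^ 2) := hsphere
    _ ≤ #(sphere u d k) * (2 ^ u * (2 ^ u) ^ 2) := by
      gcongr
      exact Nat.lt_two_pow_self.le
    _ = #(sphere u d k) * 2 ^ (3 * u) := by ring

lemma exists_isFree_subset_Icc_pow_two {γ δ L : ℕ} (hγ : 0 < γ) (hδ : 0 < δ) (hL : 1 ≤ L) :
    ∃ Q : Finset ℤ, ↑Q ⊆ Set.Icc (1 : ℤ) (2 ^ L : ℕ) ∧ IsFree γ δ ↑Q ∧
      (2 : ℝ) ^ ((L : ℝ) + 1 - (γ + δ + 6) * √L) ≤ #Q := by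
  set u := Nat.sqrt L
  have hLu : L < (u + 1) ^ 2 := Nat.lt_succ_sqrt' L
  rcases lt_or_ge u (γ + δ) with hsmall | hbig
  · -- `L < (γ + δ) ^ 2` gives `L + 1 ≤ (γ + δ + 1) √L`, so the bound to beat is at most `1`.
    refine ⟨{1}, ?_, by rw [coe_singleton]; exact Set.subsingleton_singleton.isFree _ _, ?_⟩
    · simp [one_le_pow₀]
    have hLs : √(L : ℝ) < γ + δ := by
      rw [Real.sqrt_lt' (by positivity)]
      exact_mod_cast hLu.trans_le (Nat.pow_le_pow_left hsmall 2)
    have hL1 : (1 : ℝ) ≤ √L := Real.one_le_sqrt.2 (by exact_mod_cast hL)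
    have hsqL : √(L : ℝ) ^ 2 = L := Real.sq_sqrt (Nat.cast_nonneg L)
    rw [card_singleton, Nat.cast_one]
    exact Real.rpow_le_one_of_one_le_of_nonpos one_le_two (by nlinarith)
  obtain ⟨Q, hQ, hfree, hcard⟩ := exists_isFree_subset_Icc_pow_sq hγ hδ hbig
  refine ⟨Q, hQ.trans (Set.Icc_subset_Icc_right ?_), hfree, ?_⟩
  · exact_mod_cast Nat.pow_le_pow_right two_pos (Nat.sqrt_le' L)
  have hu : (u : ℝ) ≤ √L := Real.le_sqrt_of_sq_le (by exact_mod_cast Nat.sqrt_le' L)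
  have hcardR : (2 : ℝ) ^ ((u - (γ + δ)) * u) ≤ #Q * 2 ^ (3 * u) := by exact_mod_cast hcard
  calc (2 : ℝ) ^ ((L : ℝ) + 1 - (γ + δ + 6) * √L)
      ≤ 2 ^ ((((u - (γ + δ)) * u : ℕ) : ℝ) - (3 * u : ℕ)) := by
        refine Real.rpow_le_rpow_of_exponent_le one_le_two ?_
        have hLu' : (L : ℝ) + 1 ≤ (u + 1) ^ 2 := by exact_mod_cast hLu
        have hu1 : (1 : ℝ) ≤ u := by exact_mod_cast (show 1 ≤ u by omega)
        push_cast [Nat.cast_sub hbig]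
        nlinarith [mul_le_mul_of_nonneg_left hu (by positivity : (0 : ℝ) ≤ γ + δ + 6)]
    _ = 2 ^ ((u - (γ + δ)) * u) / 2 ^ (3 * u) := by
        rw [Real.rpow_sub two_pos, Real.rpow_natCast, Real.rpow_natCast]
    _ ≤ #Q := div_le_of_le_mul₀ (by positivity) (by positivity) hcardR

theorem stmt_4 (γ δ : ℤ) (hγ : 0 < γ) (hδ : 0 < δ) :
    ∃ C : ℝ, 0 < C ∧ ∀ N : ℕ, 2 ≤ N →
      ∃ Q : Finset ℤ, ↑Q ⊆ Set.Icc (1 : ℤ) (N : ℤ) ∧ IsFree γ δ ↑Q ∧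
        (N : ℝ) / 2 ^ (C * Real.sqrt (Real.logb 2 N)) ≤ (Q.card : ℝ) := by
  lift γ to ℕ using hγ.le
  lift δ to ℕ using hδ.le
  refine ⟨γ + δ + 6, by positivity, fun N hN => ?_⟩
  set L := Nat.log 2 N
  obtain ⟨Q, hQ, hfree, hcard⟩ :=
    exists_isFree_subset_Icc_pow_two (Int.natCast_pos.1 hγ) (Int.natCast_pos.1 hδ)
      (Nat.log_pos one_lt_two hN)
  refine ⟨Q, hQ.trans (Set.Icc_subset_Icc_right ?_), hfree, ?_⟩
  · exact_mod_cast Nat.pow_log_le_self 2 (by omega)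
  have hN : (N : ℝ) ≤ 2 ^ ((L : ℝ) + 1) := by
    rw [← Nat.cast_succ, Real.rpow_natCast]
    exact_mod_cast (Nat.lt_pow_succ_log_self one_lt_two N).le
  have hlog : √(L : ℝ) ≤ √(Real.logb 2 N) :=
    Real.sqrt_le_sqrt (by exact_mod_cast Real.natLog_le_logb N 2)
  calc (N : ℝ) / 2 ^ ((γ + δ + 6 : ℝ) * √(Real.logb 2 N))
      ≤ 2 ^ ((L : ℝ) + 1) / 2 ^ ((γ + δ + 6 : ℝ) * √L) := by
        gcongr
        exact one_le_two
    _ = 2 ^ ((L : ℝ) + 1 - (γ + δ + 6) * √L) := (Real.rpow_sub two_pos _ _).symm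
    _ ≤ #Q := hcard
end

section
/- Let N ≥ 2 be an integer, let w ≥ 1 be a real number, and let Q ⊆ {1,2,…,N} be a set with |Q| ≥ N/w. Then there exist c = ⌊2·w·ln N⌋ + 1 integers Δ_1, Δ_2, …, Δ_c, each in the range [−(N−1), N−1], such that {1,2,…,N} ⊆ ∪_{i=1}^{c} (Q + Δ_i), where Q+Δ = {q+Δ : q ∈ Q}. -/
lemma exists_good_shift (N : ℕ) (hN : 1 ≤ N) (Q R : Finset ℤ)
    (hQ : Q ⊆ Finset.Icc (1 : ℤ) (N : ℤ))
    (hR : R ⊆ Finset.Icc (1 : ℤ) (N : ℤ)) :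
    ∃ Δ ∈ Finset.Icc (-((N:ℤ)-1)) ((N:ℤ)-1),
      R.card * Q.card ≤ (2*N-1) * (R ∩ Q.image (fun q => q + Δ)).card := by
  classical
  set S : Finset ℤ := Finset.Icc (-((N:ℤ)-1)) ((N:ℤ)-1) with hS
  have hN' : (1:ℤ) ≤ (N:ℤ) := by exact_mod_cast hN
  have hSne : S.Nonempty := ⟨0, by simp [hS]; omega⟩
  have hScard : S.card = 2*N - 1 := by
    rw [hS, Int.card_Icc]; omega
  have hsum : ∑ Δ ∈ S, (R ∩ Q.image (fun q => q + Δ)).card = R.card * Q.card := by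
    have h1 : ∀ Δ ∈ S, (R ∩ Q.image (fun q => q + Δ)).card
        = ∑ x ∈ R, if x ∈ Q.image (fun q => q + Δ) then 1 else 0 := by
      intro Δ _
      rw [← Finset.card_filter]
      congr 1
    rw [Finset.sum_congr rfl h1, Finset.sum_comm]
    have h2 : ∀ x ∈ R, (∑ Δ ∈ S, if x ∈ Q.image (fun q => q + Δ) then 1 else 0) = Q.card := by
      intro x hx
      rw [← Finset.card_filter]
      have hfe : S.filter (fun Δ => x ∈ Q.image (fun q => q + Δ)) = Q.image (fun q => x - q) := by
        ext Δ
        simp only [Finset.mem_filter, Finset.mem_image, hS, Finset.mem_Icc]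
        constructor
        · rintro ⟨_, q, hq, hqx⟩
          exact ⟨q, hq, by omega⟩
        · rintro ⟨q, hq, hqx⟩
          have h1 := Finset.mem_Icc.mp (hR hx)
          have h2 := Finset.mem_Icc.mp (hQ hq)
          exact ⟨by omega, q, hq, by omega⟩
      rw [hfe, Finset.card_image_of_injective _ (fun a b h => by omega)]
    rw [Finset.sum_congr rfl h2]
    simp [mul_comm]
  obtain ⟨Δ, hΔS, hmax⟩ := S.exists_max_image (fun Δ => (R ∩ Q.image (fun q => q + Δ)).card) hSne
  refine ⟨Δ, hΔS, ?_⟩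
  calc R.card * Q.card = ∑ Δ' ∈ S, (R ∩ Q.image (fun q => q + Δ')).card := hsum.symm
    _ ≤ ∑ _Δ' ∈ S, (R ∩ Q.image (fun q => q + Δ)).card := Finset.sum_le_sum hmax
    _ = S.card * (R ∩ Q.image (fun q => q + Δ)).card := by rw [Finset.sum_const, smul_eq_mul]
    _ = (2*N-1) * _ := by rw [hScard]

lemma greedy (N : ℕ) (hN : 2 ≤ N) (w : ℝ) (hw : 1 ≤ w) (Q : Finset ℤ)
    (hQ : Q ⊆ Finset.Icc (1 : ℤ) (N : ℤ)) (hcard : (N : ℝ) / w ≤ (Q.card : ℝ)) :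
    ∀ k : ℕ, ∃ f : Fin k → ℤ,
      (∀ i, -((N : ℤ) - 1) ≤ f i ∧ f i ≤ (N : ℤ) - 1) ∧
      (((Finset.Icc (1:ℤ) (N:ℤ)).filter
          (fun x => ∀ i, x ∉ Q.image (fun q => q + f i))).card : ℝ)
        ≤ (N : ℝ) * (1 - 1/(2*w)) ^ k := by
  classical
  have hw0 : (0:ℝ) < w := lt_of_lt_of_le one_pos hw
  have hr0 : (0:ℝ) ≤ 1 - 1/(2*w) := by
    have : 1/(2*w) ≤ 1/2 := by
      apply div_le_div_of_nonneg_left <;> linarith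
    linarith
  have hNR : (2:ℝ) ≤ (N:ℝ) := by exact_mod_cast hN
  intro k
  induction k with
  | zero =>
    refine ⟨Fin.elim0, fun i => i.elim0, ?_⟩
    simp only [pow_zero, mul_one]
    calc (((Finset.Icc (1:ℤ) (N:ℤ)).filter _).card : ℝ)
        ≤ ((Finset.Icc (1:ℤ) (N:ℤ)).card : ℝ) := by
          exact_mod_cast Finset.card_filter_le _ _
      _ = (N : ℝ) := by rw [Int.card_Icc]; push_cast; simp
  | succ k ih =>
    obtain ⟨f, hfb, hfc⟩ := ih
    set U := (Finset.Icc (1:ℤ) (N:ℤ)).filter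
        (fun x => ∀ i, x ∉ Q.image (fun q => q + f i)) with hU
    obtain ⟨Δ, hΔS, hΔ⟩ := exists_good_shift N (by omega) Q U hQ (Finset.filter_subset _ _)
    rw [Finset.mem_Icc] at hΔS
    refine ⟨Fin.cons Δ f, ?_, ?_⟩
    · intro i
      refine Fin.cases ?_ ?_ i
      · exact hΔS
      · intro j; exact hfb j
    · have hset : (Finset.Icc (1:ℤ) (N:ℤ)).filter
          (fun x => ∀ i, x ∉ Q.image (fun q => q + (Fin.cons Δ f : Fin (k+1) → ℤ) i))
          = U \ Q.image (fun q => q + Δ) := by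
        ext x
        simp only [hU, Finset.mem_sdiff, Finset.mem_filter, Fin.forall_fin_succ,
          Fin.cons_zero, Fin.cons_succ]
        tauto
      rw [hset]
      have hcard2 : (U \ Q.image (fun q => q + Δ)).card
          = U.card - (U ∩ Q.image (fun q => q + Δ)).card := by
        rw [← Finset.card_sdiff_add_card_inter U (Q.image (fun q => q + Δ))]
        omega
      have hIle : (U ∩ Q.image (fun q => q + Δ)).card ≤ U.card :=
        Finset.card_le_card (Finset.inter_subset_left)
      have hreal : ((U \ Q.image (fun q => q + Δ)).card : ℝ)
          = (U.card : ℝ) - ((U ∩ Q.image (fun q => q + Δ)).card : ℝ) := by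
        rw [hcard2]; push_cast [hIle]; ring
      rw [hreal]
      -- key inequality: b ≥ a/(2w)
      set a := (U.card : ℝ)
      set b := ((U ∩ Q.image (fun q => q + Δ)).card : ℝ)
      have ha0 : 0 ≤ a := Nat.cast_nonneg _
      have hab : a * (Q.card : ℝ) ≤ (2*(N:ℝ)-1) * b := by
        have := hΔ
        have h2 : ((U.card * Q.card : ℕ) : ℝ) ≤ (((2*N-1) * (U ∩ Q.image (fun q => q + Δ)).card : ℕ) : ℝ) := by
          exact_mod_cast this
        push_cast at h2
        calc a * (Q.card:ℝ) = ((U.card:ℝ) * Q.card) := rfl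
          _ ≤ ((2*N-1 : ℕ):ℝ) * b := by push_cast at h2 ⊢; linarith
          _ = (2*(N:ℝ)-1) * b := by
            congr 1
            have : (2*N-1 : ℕ) = 2*N-1 := rfl
            push_cast [Nat.cast_sub (by omega : 1 ≤ 2*N)]
            ring
      have hq : (N:ℝ) ≤ (Q.card:ℝ) * w := by
        rw [div_le_iff₀ hw0] at hcard; linarith
      have hkey : a * (1/(2*w)) ≤ b := by
        rw [mul_one_div, div_le_iff₀ (by linarith : (0:ℝ) < 2*w)]
        have h3 : a * (N:ℝ) ≤ a * ((Q.card:ℝ) * w) := by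
          apply mul_le_mul_of_nonneg_left hq ha0
        have hb0 : 0 ≤ b := Nat.cast_nonneg _
        nlinarith [mul_le_mul_of_nonneg_right hab (le_of_lt hw0)]
      have hstep : a - b ≤ a * (1 - 1/(2*w)) := by nlinarith
      calc a - b ≤ a * (1 - 1/(2*w)) := hstep
        _ ≤ ((N:ℝ) * (1 - 1/(2*w))^k) * (1 - 1/(2*w)) := by
          apply mul_le_mul_of_nonneg_right hfc hr0
        _ = (N:ℝ) * (1 - 1/(2*w))^(k+1) := by ring

theorem stmt_6 (N : ℕ) (hN : 2 ≤ N) (w : ℝ) (hw : 1 ≤ w) (Q : Finset ℤ)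
    (hQ : Q ⊆ Finset.Icc (1 : ℤ) (N : ℤ)) (hcard : (N : ℝ) / w ≤ (Q.card : ℝ)) :
    ∃ Δ : Fin (⌊2 * w * Real.log N⌋₊ + 1) → ℤ,
      (∀ i, -((N : ℤ) - 1) ≤ Δ i ∧ Δ i ≤ (N : ℤ) - 1) ∧
      ∀ x ∈ Finset.Icc (1 : ℤ) (N : ℤ), ∃ i, x ∈ Q.image (fun q => q + Δ i) := by
  classical
  set c := ⌊2 * w * Real.log N⌋₊ + 1 with hc
  obtain ⟨f, hfb, hfc⟩ := greedy N hN w hw Q hQ hcard c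
  have hw0 : (0:ℝ) < w := lt_of_lt_of_le one_pos hw
  have hr0 : (0:ℝ) ≤ 1 - 1/(2*w) := by
    have : 1/(2*w) ≤ 1/2 := by
      apply div_le_div_of_nonneg_left <;> linarith
    linarith
  have hN0 : (0:ℝ) < (N:ℝ) := by positivity
  -- N * r^c < 1
  have h1 : 1 - 1/(2*w) ≤ Real.exp (-(1/(2*w))) := by
    have := Real.add_one_le_exp (-(1/(2*w)))
    linarith
  have h2 : (1 - 1/(2*w))^c ≤ Real.exp (-((c:ℝ)/(2*w))) := by
    calc (1 - 1/(2*w))^c ≤ (Real.exp (-(1/(2*w))))^c := pow_le_pow_left₀ hr0 h1 c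
      _ = Real.exp ((c:ℝ) * (-(1/(2*w)))) := by rw [← Real.exp_nat_mul]
      _ = Real.exp (-((c:ℝ)/(2*w))) := by ring_nf
  have hlog : Real.log N < (c:ℝ)/(2*w) := by
    rw [lt_div_iff₀ (by linarith : (0:ℝ) < 2*w)]
    have := Nat.lt_floor_add_one (2 * w * Real.log N)
    have hcast : ((⌊2 * w * Real.log N⌋₊ : ℝ) + 1) = (c:ℝ) := by rw [hc]; push_cast; ring
    nlinarith
  have hNlt : (N:ℝ) < Real.exp ((c:ℝ)/(2*w)) := by
    calc (N:ℝ) = Real.exp (Real.log N) := (Real.exp_log hN0).symm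
      _ < _ := Real.exp_lt_exp.mpr hlog
  have hfinal : (N:ℝ) * (1 - 1/(2*w))^c < 1 := by
    calc (N:ℝ) * (1 - 1/(2*w))^c ≤ (N:ℝ) * Real.exp (-((c:ℝ)/(2*w))) := by
          apply mul_le_mul_of_nonneg_left h2 (le_of_lt hN0)
      _ < Real.exp ((c:ℝ)/(2*w)) * Real.exp (-((c:ℝ)/(2*w))) := by
          apply mul_lt_mul_of_pos_right hNlt (Real.exp_pos _)
      _ = 1 := by rw [← Real.exp_add]; simp
  have hcard0 : ((Finset.Icc (1:ℤ) (N:ℤ)).filter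
      (fun x => ∀ i, x ∉ Q.image (fun q => q + f i))).card = 0 := by
    by_contra h
    have : (1:ℝ) ≤ (((Finset.Icc (1:ℤ) (N:ℤ)).filter
        (fun x => ∀ i, x ∉ Q.image (fun q => q + f i))).card : ℝ) := by
      exact_mod_cast Nat.one_le_iff_ne_zero.mpr h
    linarith
  refine ⟨f, hfb, ?_⟩
  intro x hx
  by_contra hcon
  push_neg at hcon
  have : x ∈ (Finset.Icc (1:ℤ) (N:ℤ)).filter
      (fun x => ∀ i, x ∉ Q.image (fun q => q + f i)) :=
    Finset.mem_filter.mpr ⟨hx, hcon⟩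
  rw [Finset.card_eq_zero] at hcard0
  rw [hcard0] at this
  exact absurd this (Finset.notMem_empty x)
end

section
/- For all positive integers γ and δ there exists a constant C > 0 such that for every integer N ≥ 2 and every finite set A ⊆ {−N, −N+1, …, N} of integers, A can be partitioned into at most 2^{C·√(log₂ N)} pairwise disjoint (γ,δ)-free subsets whose union is A. -/
open Finset

theorem eq_of_sum_sq_eq_of_mul_add_mul_eq {ι R : Type*} [Fintype ι] [CommRing R] [LinearOrder R]
    [IsStrictOrderedRing R] {x y z : ι → R} {r γ δ : R} (hγ : 0 < γ) (hδ : 0 < δ)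
    (hx : ∑ i, x i ^ 2 = r) (hy : ∑ i, y i ^ 2 = r) (hz : ∑ i, z i ^ 2 = r)
    (hxyz : ∀ i, γ * x i + δ * y i = (γ + δ) * z i) : x = y := by
  -- termwise, `γδ(x - y)² = (γ+δ)(γx² + δy²) - (γx + δy)²`
  have hsum : γ * δ * ∑ i, (x i - y i) ^ 2 = 0 := calc
    γ * δ * ∑ i, (x i - y i) ^ 2
        = (γ + δ) * (γ * ∑ i, x i ^ 2 + δ * ∑ i, y i ^ 2) - (γ + δ) ^ 2 * ∑ i, z i ^ 2 := by
      simp only [mul_sum, ← sum_add_distrib, ← sum_sub_distrib]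
      refine sum_congr rfl fun i _ => ?_
      linear_combination (-(γ + δ) * z i - γ * x i - δ * y i) * hxyz i
    _ = 0 := by rw [hx, hy, hz]; ring
  have hsq : ∑ i, (x i - y i) ^ 2 = 0 :=
    (mul_eq_zero.mp hsum).resolve_left (mul_pos hγ hδ).ne'
  funext i
  have := (sum_eq_zero_iff_of_nonneg fun j _ => sq_nonneg (x j - y j)).mp hsq i (mem_univ i)
  exact sub_eq_zero.mp (pow_eq_zero_iff two_ne_zero |>.mp this)

theorem Nat.sum_div_pow_mod_mul_pow {q t n : ℕ} (hn : n < q ^ t) :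
    ∑ i : Fin t, n / q ^ (i : ℕ) % q * q ^ (i : ℕ) = n := by
  have := congrArg Fin.val (finFunctionFinEquiv.apply_symm_apply (⟨n, hn⟩ : Fin (q ^ t)))
  rwa [finFunctionFinEquiv_apply] at this

theorem Nat.eq_of_sum_mul_pow_eq {q t : ℕ} {f g : Fin t → ℕ} (hf : ∀ i, f i < q)
    (hg : ∀ i, g i < q) (h : ∑ i, f i * q ^ (i : ℕ) = ∑ i, g i * q ^ (i : ℕ)) : f = g := by
  have : (fun i => (⟨f i, hf i⟩ : Fin q)) = fun i => ⟨g i, hg i⟩ :=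
    finFunctionFinEquiv.injective (Fin.ext h)
  funext i
  exact congrArg Fin.val (congrFun this i)

def behrendColor (q s t n : ℕ) : (Fin t → ℕ) × ℕ :=
  (fun i => n / q ^ (i : ℕ) % q / s, ∑ i : Fin t, (n / q ^ (i : ℕ) % q % s) ^ 2)

theorem eq_of_behrendColor_eq {q s t γ δ a b c : ℕ} (hs : 0 < s) (hγ : 0 < γ) (hδ : 0 < δ)
    (hq : (γ + δ) * s = q) (ha : a < q ^ t) (hb : b < q ^ t) (hc : c < q ^ t)
    (hab : behrendColor q s t a = behrendColor q s t b)
    (hac : behrendColor q s t a = behrendColor q s t c)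
    (h : γ * a + δ * b = (γ + δ) * c) : a = b := by
  set d : ℕ → Fin t → ℕ := fun n i => n / q ^ (i : ℕ) % q
  set y : ℕ → Fin t → ℕ := fun n i => d n i % s
  set H : ℕ → ℕ := fun n => ∑ i, d n i / s * q ^ (i : ℕ)
  set Y : ℕ → ℕ := fun n => ∑ i, y n i * q ^ (i : ℕ)
  have hdecomp : ∀ n < q ^ t, n = s * H n + Y n := by
    intro n hn
    conv_lhs => rw [← Nat.sum_div_pow_mod_mul_pow hn]
    rw [mul_sum, ← sum_add_distrib]
    refine sum_congr rfl fun i _ => ?_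
    rw [← mul_assoc, ← add_mul, Nat.div_add_mod]
  have hH : ∀ n, behrendColor q s t a = behrendColor q s t n → H n = H a := by
    intro n hn
    exact sum_congr rfl fun i _ =>
      congrArg (· * q ^ (i : ℕ)) (congrFun (congrArg Prod.fst hn) i).symm
  have hlow : γ * Y a + δ * Y b = (γ + δ) * Y c := by
    rw [hdecomp a ha, hdecomp b hb, hdecomp c hc, hH b hab, hH c hac] at h
    linarith
  -- both sides of `hlow` are base-`q` expansions with digits below `(γ+δ)·s = q`
  have hdigits : (fun i => γ * y a i + δ * y b i) = fun i => (γ + δ) * y c i := by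
    refine Nat.eq_of_sum_mul_pow_eq (q := q) (fun i => ?_) (fun i => ?_) ?_
    · have hya : y a i < s := Nat.mod_lt _ hs
      have hyb : y b i < s := Nat.mod_lt _ hs
      rw [← hq]; nlinarith
    · rw [← hq]; exact Nat.mul_lt_mul_of_pos_left (Nat.mod_lt _ hs) (by omega)
    · simpa only [add_mul, mul_assoc, sum_add_distrib, ← mul_sum] using hlow
  have hy : y a = y b := by
    have hsq : ∀ n, ∑ i, ((y n i : ℕ) : ℤ) ^ 2 = ((behrendColor q s t n).2 : ℤ) := by
      intro n; push_cast [behrendColor]; rfl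
    have := eq_of_sum_sq_eq_of_mul_add_mul_eq (x := fun i => (y a i : ℤ))
      (y := fun i => (y b i : ℤ)) (z := fun i => (y c i : ℤ)) (γ := γ) (δ := δ)
      (by exact_mod_cast hγ) (by exact_mod_cast hδ) (hsq a) (by rw [hsq, hab]) (by rw [hsq, hac])
      (fun i => by exact_mod_cast congrFun hdigits i)
    funext i; exact_mod_cast congrFun this i
  rw [hdecomp a ha, hdecomp b hb, hH b hab]
  simp only [Y, hy]

theorem behrendColor_mem {q s t w : ℕ} (hq : 0 < q) (hqw : q ≤ w * s) (n : ℕ) :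
    behrendColor q s t n ∈ Fintype.piFinset (fun _ => range w) ×ˢ range (t * s ^ 2 + 1) := by
  have hs : 0 < s := Nat.pos_of_ne_zero fun hs => by simp [hs] at hqw; omega
  refine mem_product.mpr ⟨Fintype.mem_piFinset.mpr fun i => mem_range.mpr ?_, mem_range.mpr ?_⟩
  · exact Nat.div_lt_of_lt_mul ((Nat.mod_lt _ hq).trans_le (by rwa [mul_comm]))
  · have := sum_le_card_nsmul univ (fun i : Fin t => (n / q ^ (i : ℕ) % q % s) ^ 2) (s ^ 2)
      fun i _ => Nat.pow_le_pow_left (Nat.mod_lt _ hs).le 2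
    simp only [card_univ, Fintype.card_fin, smul_eq_mul] at this
    exact Nat.lt_succ_of_le this

theorem isFree_of_behrendColor_eq {q s t γ δ N : ℕ} (hs : 0 < s) (hγ : 0 < γ) (hδ : 0 < δ)
    (hq : (γ + δ) * s = q) (hN : 2 * N < q ^ t) {X : Set ℤ} (hX : X ⊆ Set.Icc (-N : ℤ) N)
    {v : (Fin t → ℕ) × ℕ} (hv : ∀ x ∈ X, behrendColor q s t (x + N).toNat = v) :
    IsFree γ δ X := by
  rintro ⟨a, ha, b, hb, c, hc, hab, -, -, h⟩
  have hlt : ∀ x ∈ X, (x + N).toNat < q ^ t := fun x hx => by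
    have := hX hx; simp only [Set.mem_Icc] at this; omega
  have hcast : ∀ x ∈ X, ((x + N).toNat : ℤ) = x + N := fun x hx =>
    Int.toNat_of_nonneg (by linarith [(hX hx).1])
  have hshift : γ * (a + N).toNat + δ * (b + N).toNat = (γ + δ) * (c + N).toNat := by
    zify; rw [hcast a ha, hcast b hb, hcast c hc]; linear_combination h
  have := eq_of_behrendColor_eq hs hγ hδ hq (hlt a ha) (hlt b hb) (hlt c hc)
    ((hv a ha).trans (hv b hb).symm) ((hv a ha).trans (hv c hc).symm) hshift
  apply hab
  linarith [hcast a ha, hcast b hb, congrArg (Nat.cast : ℕ → ℤ) this]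

theorem Finset.exists_fin_partition_of_forall_fiber {α β : Type*} [DecidableEq α] [DecidableEq β]
    {P : Finset α → Prop} (A : Finset α) (f : α → β) (hP : ∀ v, P (A.filter (f · = v))) :
    ∃ S : Fin #(A.image f) → Finset α, (∀ i, P (S i)) ∧
      (∀ i j, i ≠ j → Disjoint (S i) (S j)) ∧ univ.biUnion S = A := by
  set e := (A.image f).equivFin.symm
  refine ⟨fun i => A.filter (f · = e i), fun i => hP _, fun i j hij => ?_, ?_⟩
  · exact disjoint_filter.mpr fun x _ hi hj => hij (e.injective (Subtype.ext (hi.symm.trans hj)))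
  · ext x
    simp only [mem_biUnion, mem_univ, true_and, mem_filter]
    refine ⟨fun ⟨_, hx, _⟩ => hx, fun hx => ⟨e.symm ⟨f x, mem_image_of_mem f hx⟩, hx, ?_⟩⟩
    rw [Equiv.apply_symm_apply]

theorem two_mul_lt_pow_sqrt_log {w : ℕ} (hw : 2 ≤ w) (N : ℕ) :
    2 * N < (w * 2 ^ (Nat.sqrt (Nat.log 2 N) + 1)) ^ (Nat.sqrt (Nat.log 2 N) + 1) := by
  set t := Nat.sqrt (Nat.log 2 N) + 1
  have hN : N < 2 ^ t ^ 2 := (Nat.lt_pow_succ_log_self one_lt_two N).trans_le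
    (Nat.pow_le_pow_right two_pos (Nat.lt_succ_sqrt' _))
  have hwt : 2 ≤ w ^ t := hw.trans (Nat.le_self_pow (by omega) w)
  calc 2 * N < 2 * 2 ^ t ^ 2 := by omega
    _ ≤ w ^ t * 2 ^ t ^ 2 := Nat.mul_le_mul_right _ hwt
    _ = (w * 2 ^ t) ^ t := by rw [mul_pow, ← pow_mul, sq]

theorem pow_mul_sq_two_pow_succ_le (w t : ℕ) : w ^ t * (t * (2 ^ t) ^ 2 + 1) ≤ (8 * w) ^ t := by
  have ht : t + 1 ≤ 2 ^ t := Nat.lt_two_pow_self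
  have hpos : 1 ≤ (2 ^ t) ^ 2 := Nat.one_le_pow _ _ (by positivity)
  calc w ^ t * (t * (2 ^ t) ^ 2 + 1) ≤ w ^ t * (2 ^ t * (2 ^ t) ^ 2) := by
        gcongr; nlinarith
    _ = (8 * w) ^ t := by rw [mul_pow, ← pow_succ', ← pow_mul, mul_comm, pow_mul']; norm_num

theorem Real.pow_le_two_rpow_logb_mul {B u : ℝ} (hB : 1 ≤ B) {t : ℕ} (ht : (t : ℝ) ≤ u) :
    B ^ t ≤ 2 ^ (logb 2 B * u) := calc
  B ^ t = 2 ^ (logb 2 B * t) := by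
    rw [rpow_mul (by norm_num), rpow_logb (by norm_num) (by norm_num) (by linarith), rpow_natCast]
  _ ≤ 2 ^ (logb 2 B * u) := rpow_le_rpow_of_exponent_le one_le_two
    (mul_le_mul_of_nonneg_left ht (logb_nonneg one_lt_two hB))

theorem sqrt_log_succ_le_two_mul_sqrt_logb {N : ℕ} (hN : 2 ≤ N) :
    ((Nat.sqrt (Nat.log 2 N) + 1 : ℕ) : ℝ) ≤ 2 * √(Real.logb 2 N) := by
  have hlog : (Nat.log 2 N : ℝ) ≤ Real.logb 2 N := Real.natLog_le_logb N 2
  have h1 : (Nat.sqrt (Nat.log 2 N) : ℝ) ≤ √(Real.logb 2 N) :=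
    Real.nat_sqrt_le_real_sqrt.trans (Real.sqrt_le_sqrt hlog)
  have h2 : 1 ≤ √(Real.logb 2 N) := by
    have : (1 : ℝ) ≤ Nat.log 2 N := by exact_mod_cast Nat.log_pos one_lt_two hN
    exact Real.one_le_sqrt.mpr (this.trans hlog)
  push_cast
  linarith

theorem stmt_8 (γ δ : ℤ) (hγ : 0 < γ) (hδ : 0 < δ) :
    ∃ C : ℝ, 0 < C ∧ ∀ N : ℕ, 2 ≤ N →
      ∀ A : Finset ℤ, A ⊆ Finset.Icc (-(N : ℤ)) (N : ℤ) →
        ∃ c : ℕ, (c : ℝ) ≤ 2 ^ (C * Real.sqrt (Real.logb 2 N)) ∧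
          ∃ S : Fin c → Finset ℤ,
            (∀ i, IsFree γ δ ↑(S i)) ∧
            (∀ i j, i ≠ j → Disjoint (S i) (S j)) ∧
            Finset.univ.biUnion S = A := by
  lift γ to ℕ using hγ.le
  lift δ to ℕ using hδ.le
  have hγ : 0 < γ := by exact_mod_cast hγ
  have hδ : 0 < δ := by exact_mod_cast hδ
  have h8w : (1 : ℝ) < 8 * (γ + δ : ℕ) := by norm_cast; omega
  refine ⟨2 * Real.logb 2 (8 * (γ + δ : ℕ)), by positivity [Real.logb_pos one_lt_two h8w],
    fun N hN A hA => ?_⟩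
  set t := Nat.sqrt (Nat.log 2 N) + 1
  set s := 2 ^ t
  set col : ℤ → (Fin t → ℕ) × ℕ := fun x => behrendColor ((γ + δ) * s) s t (x + N).toNat
  obtain ⟨S, hfree, hdisj, hunion⟩ := exists_fin_partition_of_forall_fiber
    (P := fun X => IsFree γ δ ↑X) A col fun v =>
      isFree_of_behrendColor_eq (by positivity) hγ hδ rfl
        (two_mul_lt_pow_sqrt_log (by omega) N)
        (fun x hx => by rw [mem_coe, mem_filter] at hx; simpa using hA hx.1)
        fun x hx => by rw [mem_coe, mem_filter] at hx; exact hx.2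
  refine ⟨_, ?_, S, hfree, hdisj, hunion⟩
  have hcard : #(A.image col) ≤ (γ + δ) ^ t * (t * s ^ 2 + 1) := by
    simpa using card_le_card (image_subset_iff.mpr fun x _ =>
      behrendColor_mem (w := γ + δ) (by positivity) le_rfl (x + (N : ℤ)).toNat)
  calc (#(A.image col) : ℝ) ≤ (8 * ((γ + δ : ℕ) : ℝ)) ^ t := by
        exact_mod_cast hcard.trans (pow_mul_sq_two_pow_succ_le _ t)
    _ ≤ _ := by
        rw [mul_comm 2, mul_assoc]
        exact Real.pow_le_two_rpow_logb_mul h8w.le (sqrt_log_succ_le_two_mul_sqrt_logb hN)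
end

section
/- Let α_1, α_2, α_3 be nonzero integers. Then there exist nonzero integers γ_1, γ_2, γ_3 such that α_1·γ_1 + α_2·γ_2 + α_3·γ_3 = 0 and, for every combination f : {1,2,3} → {1,2,3} that is forbidden and non-constant, α_1·γ_{f(1)} + α_2·γ_{f(2)} + α_3·γ_{f(3)} ≠ 0. -/
/-- A combination `f : {1,2,3} → {1,2,3}` is allowed (w.r.t. coefficients `α`) if for every
`i` the image under `f` of the set of indices with the same coefficient as `α i` equals
that set; otherwise it is forbidden. -/
def Allowed (α : Fin 3 → ℤ) (f : Fin 3 → Fin 3) : Prop :=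
  ∀ i : Fin 3,
    Finset.image f (Finset.univ.filter fun x => α x = α i) =
      Finset.univ.filter fun x => α x = α i

/-- A combination is constant if it takes a single value. -/
def IsConstantComb (f : Fin 3 → Fin 3) : Prop := ∃ j : Fin 3, ∀ i, f i = j

/-!
The admissible `γ` form the plane `α ⬝ᵥ γ = 0`. For a combination `f`, the form
`γ ↦ ∑ i, α i * γ (f i)` is `γ ↦ β ⬝ᵥ γ`, where `β j` is the sum of `α` over the fibre `f⁻¹ j`;
it vanishes on the plane only when `β` is proportional to `α`. With three nonzero coefficients
this forces `f` to be constant or a permutation with `α ∘ f = α` (the constant of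
proportionality `c` satisfies `c ^ 3 = 1`), and such an `f` is allowed. A vector space over an
infinite field is not covered by finitely many kernels of nonzero forms, which yields a rational
`γ` in the plane avoiding those kernels and the coordinate planes; clearing denominators makes it
integral.
-/

open Function

section FiberSum

variable {ι R : Type*} [Fintype ι] [DecidableEq ι] [CommRing R]

def fiberSum (α : ι → R) (f : ι → ι) (j : ι) : R :=
  ∑ i with f i = j, α i

theorem sum_mul_comp_eq_fiberSum_dotProduct (α γ : ι → R) (f : ι → ι) :
    ∑ i, α i * γ (f i) = fiberSum α f ⬝ᵥ γ := by
  simp only [dotProduct, fiberSum, Finset.sum_mul]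
  rw [← Finset.sum_fiberwise Finset.univ f]
  refine Finset.sum_congr rfl fun j _ => Finset.sum_congr rfl fun i hi => ?_
  rw [(Finset.mem_filter.1 hi).2]

theorem fiberSum_apply_of_fiber_singleton (α : ι → R) {f : ι → ι} {i : ι}
    (hi : ∀ k, f k = f i → k = i) : fiberSum α f (f i) = α i := by
  rw [fiberSum, Finset.sum_eq_single_of_mem i (by simp)]
  intro k hk hki
  exact absurd (hi k (Finset.mem_filter.1 hk).2) hki

theorem fiberSum_eq_zero_of_notMem_range (α : ι → R) {f : ι → ι} {j : ι}
    (hj : j ∉ Set.range f) : fiberSum α f j = 0 :=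
  Finset.sum_eq_zero fun i hi => absurd ⟨i, (Finset.mem_filter.1 hi).2⟩ hj

theorem fiberSum_intCast (α : ι → ℤ) (f : ι → ι) (j : ι) :
    fiberSum (fun i => (α i : R)) f j = fiberSum α f j := by
  simp [fiberSum]

theorem mul_eq_mul_of_forall_dotProduct_eq_zero {α β : ι → R}
    (h : ∀ γ, α ⬝ᵥ γ = 0 → β ⬝ᵥ γ = 0) (j k : ι) : β j * α k = β k * α j := by
  have := h (Pi.single j (α k) - Pi.single k (α j)) (by simp [dotProduct_sub, mul_comm])
  simpa [dotProduct_sub, sub_eq_zero] using this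

end FiberSum

theorem apply_perm_eq_of_mul_eq_mul {ι R : Type*} [Fintype ι] [CommRing R] [LinearOrder R]
    [IsStrictOrderedRing R] (hodd : Odd (Fintype.card ι)) {σ : Equiv.Perm ι} {α : ι → R}
    (hα : ∀ i, α i ≠ 0) (h : ∀ j k, α (σ j) * α k = α (σ k) * α j) (i : ι) :
    α (σ i) = α i := by
  have hprod : (∏ k, α k) * α (σ i) ^ Fintype.card ι = (∏ k, α k) * α i ^ Fintype.card ι := by
    calc (∏ k, α k) * α (σ i) ^ Fintype.card ι = ∏ k, α k * α (σ i) := by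
          rw [Finset.prod_mul_distrib, Finset.prod_const, Finset.card_univ]
      _ = ∏ k, α (σ k) * α i := Finset.prod_congr rfl fun k _ => by rw [h k i, mul_comm]
      _ = (∏ k, α k) * α i ^ Fintype.card ι := by
          rw [Finset.prod_mul_distrib, Finset.prod_const, Finset.card_univ, Equiv.prod_comp]
  exact hodd.pow_inj.1 (mul_left_cancel₀ (Finset.prod_ne_zero_iff.2 fun k _ => hα k) hprod)

theorem allowed_of_surjective {α : Fin 3 → ℤ} {f : Fin 3 → Fin 3} (hf : Surjective f)
    (hα : ∀ x, α (f x) = α x) : Allowed α f := by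
  intro i
  ext y
  simp only [Finset.mem_image, Finset.mem_filter, Finset.mem_univ, true_and]
  constructor
  · rintro ⟨x, hx, rfl⟩
    rwa [hα]
  · intro hy
    obtain ⟨x, rfl⟩ := hf y
    exact ⟨x, by rwa [← hα], rfl⟩

theorem exists_fiber_singleton_of_not_surjective (f : Fin 3 → Fin 3) (hs : ¬Surjective f)
    (hc : ¬IsConstantComb f) : ∃ i, ∀ k, f k = f i → k = i := by
  revert f
  unfold IsConstantComb
  decide

theorem allowed_or_isConstantComb_of_mul_eq_mul {α : Fin 3 → ℤ} (hα : ∀ i, α i ≠ 0)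
    {f : Fin 3 → Fin 3} (h : ∀ j k, fiberSum α f j * α k = fiberSum α f k * α j) :
    Allowed α f ∨ IsConstantComb f := by
  by_cases hs : Surjective f
  · have hinj : Injective f := Finite.injective_iff_surjective.2 hs
    have hfib (i : Fin 3) : fiberSum α f (f i) = α i :=
      fiberSum_apply_of_fiber_singleton α fun k hk => hinj hk
    refine Or.inl (allowed_of_surjective hs fun x =>
      apply_perm_eq_of_mul_eq_mul (σ := Equiv.ofBijective f ⟨hinj, hs⟩) (by decide) hα ?_ x)
    intro j k
    have := h (f k) (f j)
    rw [hfib, hfib] at this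
    change α (f j) * α k = α (f k) * α j
    linarith
  · -- A missing value `j` has an empty fibre, so proportionality forces `fiberSum α f = 0`,
    -- whereas a singleton fibre `{i}` carries `α i ≠ 0`.
    by_contra hcon
    obtain ⟨i, hi⟩ := exists_fiber_singleton_of_not_surjective f hs (not_or.1 hcon).2
    obtain ⟨j, hj⟩ : ∃ j, j ∉ Set.range f := by simpa [Surjective] using hs
    have := h (f i) j
    rw [fiberSum_eq_zero_of_notMem_range α hj, fiberSum_apply_of_fiber_singleton α hi, zero_mul]
      at this
    exact mul_ne_zero (hα i) (hα j) this

theorem exists_rat_shift_coeffs (α : Fin 3 → ℤ) (hα : ∀ i, α i ≠ 0) :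
    ∃ γ : Fin 3 → ℚ, (∀ i, γ i ≠ 0) ∧ (∑ i, (α i : ℚ) * γ i = 0) ∧
      ∀ f : Fin 3 → Fin 3, ¬ Allowed α f → ¬ IsConstantComb f →
        ∑ i, (α i : ℚ) * γ (f i) ≠ 0 := by
  set α' : Fin 3 → ℚ := fun i => (α i : ℚ)
  set P := LinearMap.ker (dotProductBilin ℚ ℚ α')
  have hcoord (i : Fin 3) : ∃ γ ∈ P, γ i ≠ 0 := by
    refine ⟨Pi.single i (α' (i + 1)) - Pi.single (i + 1) (α' i), ?_, by simp [α', hα]⟩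
    simp [P, dotProduct_sub, mul_comm]
  have hform (f : Fin 3 → Fin 3) (hA : ¬ Allowed α f) (hC : ¬ IsConstantComb f) :
      ∃ γ ∈ P, fiberSum α' f ⬝ᵥ γ ≠ 0 := by
    by_contra! h
    refine (allowed_or_isConstantComb_of_mul_eq_mul hα fun j k => ?_).elim hA hC
    have := mul_eq_mul_of_forall_dotProduct_eq_zero (α := α') (β := fiberSum α' f) h j k
    simp only [α', fiberSum_intCast] at this
    exact_mod_cast this
  obtain ⟨γ, hγP, hγ⟩ := Module.Dual.exists_forall_mem_ne_zero_of_forall_exists P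
    (Sum.elim (LinearMap.proj (φ := fun _ : Fin 3 => ℚ))
      fun f : {f // ¬ Allowed α f ∧ ¬ IsConstantComb f} => dotProductBilin ℚ ℚ (fiberSum α' f))
    (Sum.forall.2 ⟨hcoord, fun f => hform f f.2.1 f.2.2⟩)
  refine ⟨γ, fun i => hγ (.inl i), hγP, fun f hA hC => ?_⟩
  rw [sum_mul_comp_eq_fiberSum_dotProduct]
  exact hγ (.inr ⟨f, hA, hC⟩)

theorem stmt_9 (α : Fin 3 → ℤ) (hα : ∀ i, α i ≠ 0) :
    ∃ γ : Fin 3 → ℤ, (∀ i, γ i ≠ 0) ∧ (∑ i, α i * γ i = 0) ∧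
      ∀ f : Fin 3 → Fin 3, ¬ Allowed α f → ¬ IsConstantComb f →
        ∑ i, α i * γ (f i) ≠ 0 := by
  obtain ⟨γ, hγ0, hγ, hγf⟩ := exists_rat_shift_coeffs α hα
  obtain ⟨⟨d, hd⟩, hdγ⟩ := IsLocalization.exist_integer_multiples_of_finite (nonZeroDivisors ℤ) γ
  choose c hc using hdγ
  simp only [algebraMap_int_eq, eq_intCast, zsmul_eq_mul] at hc
  have hd0 : (d : ℚ) ≠ 0 := by exact_mod_cast nonZeroDivisors.ne_zero hd
  have hcast (g : Fin 3 → Fin 3) :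
      (∑ i, α i * c (g i) : ℚ) = d * ∑ i, (α i : ℚ) * γ (g i) := by
    simp only [hc, Finset.mul_sum]
    exact Finset.sum_congr rfl fun _ _ => by ring
  refine ⟨c, fun i => ?_, ?_, fun f hA hC => ?_⟩
  · exact_mod_cast (hc i).trans_ne (mul_ne_zero hd0 (hγ0 i))
  · have := hcast id
    simp only [id, hγ, mul_zero] at this
    exact_mod_cast this
  · exact_mod_cast (hcast f).trans_ne (mul_ne_zero hd0 (hγf f hA hC))
end

section
/- Let α_1, α_2, α_3 be nonzero integers and let t be a nonzero integer. Let γ_1, γ_2, γ_3 be nonzero integers such that Σ_{i=1}^{3} α_i·γ_i = 0 and Σ_{i=1}^{3} α_i·γ_{f(i)} ≠ 0 for every forbidden non-constant combination f : {1,2,3} → {1,2,3}. Let y_1, y_2, y_3 be integers with Σ_{i=1}^{3} α_i·y_i = t. Let C be an integer with C > 2·(max_i max(|γ_i|, |y_i|))·(|α_1| + |α_2| + |α_3|). Let A_1, A_2, A_3 be finite sets of integers and define X = ∪_{i=1}^{3} { C²·x + C·γ_i + y_i : x ∈ A_i }. Then there exist z_1, z_2, z_3 ∈ X with Σ_{i=1}^{3}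 α_i·z_i = t if and only if there exist x_1 ∈ A_1, x_2 ∈ A_2, x_3 ∈ A_3 with Σ_{i=1}^{3} α_i·x_i = 0. -/
theorem stmt_12 (α : Fin 3 → ℤ) (hα : ∀ i, α i ≠ 0) (t : ℤ) (ht : t ≠ 0)
    (γ : Fin 3 → ℤ) (hγ : ∀ i, γ i ≠ 0) (hγ0 : ∑ i, α i * γ i = 0)
    (hγf : ∀ f : Fin 3 → Fin 3, ¬ Allowed α f → ¬ IsConstantComb f →
      ∑ i, α i * γ (f i) ≠ 0)
    (y : Fin 3 → ℤ) (hy : ∑ i, α i * y i = t)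
    (C : ℤ)
    (hC : 2 * (Finset.univ.sup' Finset.univ_nonempty fun i => max |γ i| |y i|) *
        (∑ i, |α i|) < C)
    (A : Fin 3 → Finset ℤ)
    (X : Set ℤ) (hX : X = ⋃ i, (fun x => C ^ 2 * x + C * γ i + y i) '' ↑(A i)) :
    (∃ z : Fin 3 → ℤ, (∀ i, z i ∈ X) ∧ ∑ i, α i * z i = t) ↔
      (∃ x : Fin 3 → ℤ, (∀ i, x i ∈ A i) ∧ ∑ i, α i * x i = 0) := by
  set M : ℤ := Finset.univ.sup' Finset.univ_nonempty fun i => max |γ i| |y i| with hM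
  have hMm : ∀ i, max |γ i| |y i| ≤ M := fun i =>
    Finset.le_sup' (fun i => max |γ i| |y i|) (Finset.mem_univ i)
  have hMγ : ∀ i, |γ i| ≤ M := fun i => le_trans (le_max_left _ _) (hMm i)
  have hMy : ∀ i, |y i| ≤ M := fun i => le_trans (le_max_right _ _) (hMm i)
  have hMnn : 0 ≤ M := le_trans (abs_nonneg _) (hMγ 0)
  have hAnn : 0 ≤ ∑ i, |α i| := Finset.sum_nonneg fun i _ => abs_nonneg _
  have key : ∀ w : Fin 3 → ℤ, (∀ i, |w i| ≤ M) → |∑ i, α i * w i| ≤ M * ∑ i, |α i| := by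
    intro w hw
    calc |∑ i, α i * w i| ≤ ∑ i, |α i * w i| := Finset.abs_sum_le_sum_abs _ _
      _ = ∑ i, |α i| * |w i| := by simp [abs_mul]
      _ ≤ ∑ i, |α i| * M :=
        Finset.sum_le_sum fun i _ => mul_le_mul_of_nonneg_left (hw i) (abs_nonneg _)
      _ = M * ∑ i, |α i| := by rw [← Finset.sum_mul, mul_comm]
  have hMA : 0 ≤ M * ∑ i, |α i| := mul_nonneg hMnn hAnn
  have hCpos : 0 < C := lt_of_le_of_lt (by linarith) hC
  have hCne : C ≠ 0 := ne_of_gt hCpos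
  have htb : |t| ≤ M * ∑ i, |α i| := hy ▸ key y hMy
  constructor
  · rintro ⟨z, hz, hsum⟩
    have hmem : ∀ i, ∃ j : Fin 3, ∃ a ∈ A j, C ^ 2 * a + C * γ j + y j = z i := by
      intro i
      have h := hz i
      rw [hX] at h
      simpa [Set.mem_iUnion] using h
    choose f x hxA hzx using hmem
    set S := ∑ i, α i * x i with hS
    set G := ∑ i, α i * γ (f i) with hG
    set Yf := ∑ i, α i * y (f i) with hYf
    have hEq : C ^ 2 * S + C * G + Yf = t := by
      rw [← hsum]
      simp only [hS, hG, hYf, ← hzx]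
      rw [Fin.sum_univ_three, Fin.sum_univ_three, Fin.sum_univ_three, Fin.sum_univ_three]
      ring
    have hGb : |G| ≤ M * ∑ i, |α i| := key _ fun i => hMγ (f i)
    have hYb : |Yf| ≤ M * ∑ i, |α i| := key _ fun i => hMy (f i)
    -- Yf = t
    have hdvd : C ∣ (Yf - t) := ⟨-(C * S + G), by linear_combination hEq⟩
    have hYt : Yf = t := by
      have h1 : Yf - t = 0 := Int.eq_zero_of_abs_lt_dvd hdvd (by
        calc |Yf - t| ≤ |Yf| + |t| := abs_sub _ _
          _ < C := by linarith)
      linarith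
    have hG0 : G = 0 := by
      have hCG : C * G = C * (C * (-S)) := by linear_combination hEq - hYt
      have hdvd2 : C ∣ G := ⟨-S, mul_left_cancel₀ hCne hCG⟩
      exact Int.eq_zero_of_abs_lt_dvd hdvd2 (by linarith)
    have hS0 : S = 0 := by
      have : C ^ 2 * S = 0 := by linear_combination hEq - hYt - C * hG0
      have hC2 : (C : ℤ) ^ 2 ≠ 0 := pow_ne_zero _ hCne
      exact (mul_eq_zero.mp this).resolve_left hC2
    -- f is allowed
    have hAll : Allowed α f := by
      by_contra hNot
      by_cases hc : IsConstantComb f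
      · obtain ⟨j, hj⟩ := hc
        have hGc : (∑ i, α i) * γ j = 0 := by
          rw [← hG0, hG]
          simp only [hj]
          rw [Fin.sum_univ_three, Fin.sum_univ_three]; ring
        have hαsum : (∑ i, α i) = 0 := (mul_eq_zero.mp hGc).resolve_right (hγ j)
        have hYc : Yf = (∑ i, α i) * y j := by
          rw [hYf]
          simp only [hj]
          rw [Fin.sum_univ_three, Fin.sum_univ_three]; ring
        rw [hYt, hαsum, zero_mul] at hYc
        exact ht hYc
      · exact hγf f hNot hc hG0
    have hαf : ∀ i, α (f i) = α i := by
      intro i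
      have h := hAll i
      have hmem2 : f i ∈ Finset.image f (Finset.univ.filter fun x => α x = α i) :=
        Finset.mem_image_of_mem f (by simp)
      rw [h] at hmem2
      simpa using hmem2
    have hinj : Function.Injective f := by
      intro a b hab
      have hcard : (Finset.image f (Finset.univ.filter fun x => α x = α a)).card
          = (Finset.univ.filter fun x => α x = α a).card := by rw [hAll a]
      have hinjOn := Finset.injOn_of_card_image_eq hcard
      have hba : α b = α a := by rw [← hαf b, ← hab, hαf a]
      exact hinjOn (by simp) (by simp [hba]) hab
    have hbij : Function.Bijective f := Finite.injective_iff_bijective.mp hinj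
    set e := Equiv.ofBijective f hbij with he
    refine ⟨fun j => x (e.symm j), fun j => ?_, ?_⟩
    · have : f (e.symm j) = j := e.apply_symm_apply j
      have hx := hxA (e.symm j)
      rwa [this] at hx
    · have hcomp := Equiv.sum_comp e (fun j => α j * x (e.symm j))
      rw [← hcomp]
      have : ∀ i, α (e i) * x (e.symm (e i)) = α i * x i := by
        intro i
        rw [e.symm_apply_apply]
        have : e i = f i := rfl
        rw [this, hαf i]
      rw [Finset.sum_congr rfl fun i _ => this i]
      exact hS0
  · rintro ⟨x, hxA, hsum⟩
    refine ⟨fun i => C ^ 2 * x i + C * γ i + y i, fun i => ?_, ?_⟩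
    · rw [hX]
      exact Set.mem_iUnion.2 ⟨i, ⟨x i, hxA i, rfl⟩⟩
    · rw [Fin.sum_univ_three] at hsum hγ0 hy ⊢
      linear_combination C ^ 2 * hsum + C * hγ0 + hy
end

section
/- Let α_1, α_2, α_3 be nonzero integers, t an integer, U and V positive integers with α_3 dividing V. Let A_1, A_2, A_3 be finite sets of integers contained in [−U, U], and let W = |t| + (|α_1| + |α_2|)·V. For a triple of integers (j_1, j_2, j_3) define A'_1 = { x − V·j_1 : x ∈ A_1, V·j_1 ≤ x < V·(j_1+1) }, A'_2 = { x − V·j_2 : x ∈ A_2, V·j_2 ≤ x < V·(j_2+1) }, and A'_3 = { x − V·j_3 + (V/α_3)·(α_1·j_1 + α_2·j_2 + α_3·j_3) : x ∈ A_3, V·j_3 ≤ x < V·(j_3+1) } ∩ { z : |α_3·z| ≤ W }. Then there exist x_1 ∈ A_1, x_2 ∈ A_2, x_3 ∈ A_3 with Σ_{i=1}^{3} α_i·x_i = t if and only if there exists a triple of integers (j_1, j_2, j_3) with −U/V − 1 ≤ j_i ≤ U/V for each i and elements x'_1 ∈ A'_1, x'_2 ∈ A'_2, x'_3 ∈ A'_3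 (for that triple) with Σ_{i=1}^{3} α_i·x'_i = t. -/
/-- The elements of `A` lying in the bucket `[V·j, V·(j+1))`, translated to `[0, V)`. -/
def bucket (A : Finset ℤ) (V j : ℤ) : Finset ℤ :=
  (A.filter fun x => V * j ≤ x ∧ x < V * (j + 1)).image fun x => x - V * j

lemma mem_bucket {A : Finset ℤ} {V j y : ℤ} :
    y ∈ bucket A V j ↔ ∃ x ∈ A, (V * j ≤ x ∧ x < V * (j + 1)) ∧ x - V * j = y := by
  simp [bucket]; tauto

lemma j_bound {U V x j : ℤ} (hV : 0 < V) (hx : -U ≤ x) (hx' : x ≤ U)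
    (h1 : V * j ≤ x) (h2 : x < V * (j + 1)) :
    -(U : ℚ) / (V : ℚ) - 1 ≤ (j : ℚ) ∧ (j : ℚ) ≤ (U : ℚ) / (V : ℚ) := by
  have hVq : (0 : ℚ) < (V : ℚ) := by exact_mod_cast hV
  have h1q : (V : ℚ) * j ≤ x := by exact_mod_cast h1
  have h2q : (x : ℚ) < V * (j + 1) := by exact_mod_cast h2
  have hxq : -(U : ℚ) ≤ x := by exact_mod_cast hx
  have hx'q : (x : ℚ) ≤ U := by exact_mod_cast hx'
  constructor
  · have : -(U : ℚ) / V < j + 1 := by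
      rw [div_lt_iff₀ hVq]; nlinarith
    linarith
  · rw [le_div_iff₀ hVq]; nlinarith

theorem stmt_13 (α1 α2 α3 : ℤ) (hα1 : α1 ≠ 0) (hα2 : α2 ≠ 0) (hα3 : α3 ≠ 0)
    (t U V : ℤ) (hU : 0 < U) (hV : 0 < V) (hdvd : α3 ∣ V)
    (A1 A2 A3 : Finset ℤ)
    (hA1 : A1 ⊆ Finset.Icc (-U) U) (hA2 : A2 ⊆ Finset.Icc (-U) U)
    (hA3 : A3 ⊆ Finset.Icc (-U) U)
    (W : ℤ) (hW : W = |t| + (|α1| + |α2|) * V) :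
    (∃ x1 ∈ A1, ∃ x2 ∈ A2, ∃ x3 ∈ A3, α1 * x1 + α2 * x2 + α3 * x3 = t) ↔
      (∃ j1 j2 j3 : ℤ,
        (-(U : ℚ) / (V : ℚ) - 1 ≤ (j1 : ℚ) ∧ (j1 : ℚ) ≤ (U : ℚ) / (V : ℚ)) ∧
        (-(U : ℚ) / (V : ℚ) - 1 ≤ (j2 : ℚ) ∧ (j2 : ℚ) ≤ (U : ℚ) / (V : ℚ)) ∧
        (-(U : ℚ) / (V : ℚ) - 1 ≤ (j3 : ℚ) ∧ (j3 : ℚ) ≤ (U : ℚ) / (V : ℚ)) ∧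
        ∃ x1' ∈ bucket A1 V j1, ∃ x2' ∈ bucket A2 V j2,
          ∃ x3' ∈ ((bucket A3 V j3).image
              (fun x => x + (V / α3) * (α1 * j1 + α2 * j2 + α3 * j3))).filter
              (fun z => |α3 * z| ≤ W),
            α1 * x1' + α2 * x2' + α3 * x3' = t) := by
  have hcancel : α3 * (V / α3) = V := Int.mul_ediv_cancel' hdvd
  constructor
  · rintro ⟨x1, hx1, x2, hx2, x3, hx3, heq⟩
    obtain ⟨hb1l, hb1r⟩ := Finset.mem_Icc.mp (hA1 hx1)
    obtain ⟨hb2l, hb2r⟩ := Finset.mem_Icc.mp (hA2 hx2)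
    obtain ⟨hb3l, hb3r⟩ := Finset.mem_Icc.mp (hA3 hx3)
    set j1 := x1 / V with hj1
    set j2 := x2 / V with hj2
    set j3 := x3 / V with hj3
    have hfl : ∀ x : ℤ, V * (x / V) ≤ x ∧ x < V * (x / V + 1) := by
      intro x
      have h := Int.emod_nonneg x hV.ne'
      have h' := Int.emod_lt_of_pos x hV
      have heq := Int.mul_ediv_add_emod x V
      constructor <;> nlinarith
    obtain ⟨hl1, hr1⟩ := hfl x1
    obtain ⟨hl2, hr2⟩ := hfl x2
    obtain ⟨hl3, hr3⟩ := hfl x3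
    refine ⟨j1, j2, j3, j_bound hV hb1l hb1r hl1 hr1, j_bound hV hb2l hb2r hl2 hr2,
      j_bound hV hb3l hb3r hl3 hr3, x1 - V * j1, mem_bucket.mpr ⟨x1, hx1, ⟨hl1, hr1⟩, rfl⟩,
      x2 - V * j2, mem_bucket.mpr ⟨x2, hx2, ⟨hl2, hr2⟩, rfl⟩,
      x3 - V * j3 + (V / α3) * (α1 * j1 + α2 * j2 + α3 * j3), ?_, ?_⟩
    · rw [Finset.mem_filter]
      constructor
      · exact Finset.mem_image.mpr ⟨x3 - V * j3, mem_bucket.mpr ⟨x3, hx3, ⟨hl3, hr3⟩, rfl⟩, rfl⟩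
      · have hval : α3 * (x3 - V * j3 + (V / α3) * (α1 * j1 + α2 * j2 + α3 * j3)) =
            t - α1 * (x1 - V * j1) - α2 * (x2 - V * j2) := by
          have : α3 * ((V / α3) * (α1 * j1 + α2 * j2 + α3 * j3)) =
              V * (α1 * j1 + α2 * j2 + α3 * j3) := by
            rw [← mul_assoc, hcancel]
          nlinarith [this]
        rw [hval, hW]
        have h1 : |α1 * (x1 - V * j1)| ≤ |α1| * V := by
          rw [abs_mul, abs_of_nonneg (by linarith : (0:ℤ) ≤ x1 - V * j1)]
          exact mul_le_mul_of_nonneg_left (by linarith) (abs_nonneg _)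
        have h2 : |α2 * (x2 - V * j2)| ≤ |α2| * V := by
          rw [abs_mul, abs_of_nonneg (by linarith : (0:ℤ) ≤ x2 - V * j2)]
          exact mul_le_mul_of_nonneg_left (by linarith) (abs_nonneg _)
        rw [abs_le]
        constructor
        all_goals
          have := neg_abs_le t
          have := le_abs_self t
          have := neg_abs_le (α1 * (x1 - V * j1))
          have := le_abs_self (α1 * (x1 - V * j1))
          have := neg_abs_le (α2 * (x2 - V * j2))
          have := le_abs_self (α2 * (x2 - V * j2))
          linarith
    · have : α3 * ((V / α3) * (α1 * j1 + α2 * j2 + α3 * j3)) =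
          V * (α1 * j1 + α2 * j2 + α3 * j3) := by
        rw [← mul_assoc, hcancel]
      nlinarith [this]
  · rintro ⟨j1, j2, j3, -, -, -, x1', hx1', x2', hx2', x3', hx3', heq⟩
    obtain ⟨x1, hx1, -, h1⟩ := mem_bucket.mp hx1'
    obtain ⟨x2, hx2, -, h2⟩ := mem_bucket.mp hx2'
    obtain ⟨hmem, -⟩ := Finset.mem_filter.mp hx3'
    obtain ⟨y, hy, h3⟩ := Finset.mem_image.mp hmem
    obtain ⟨x3, hx3, -, h3'⟩ := mem_bucket.mp hy
    refine ⟨x1, hx1, x2, hx2, x3, hx3, ?_⟩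
    have hkey : α3 * ((V / α3) * (α1 * j1 + α2 * j2 + α3 * j3)) =
        V * (α1 * j1 + α2 * j2 + α3 * j3) := by
      rw [← mul_assoc, hcancel]
    subst h1 h2 h3'
    rw [← h3] at heq
    nlinarith [hkey, heq]
end
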